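/- arXiv:2305.06580 — 3 statements merged into one kernel-verified Lean document; each statement's English description precedes it below -/
import Mathlib

section
/- For n = 3 and f ∈ C₀^∞(ℝ³ \ {0}), the radial Rellich inequality ‖Δ_r f‖₂² ≥ (9/16) ‖f/|x|²‖₂² holds, where Δ_r = ∂_r² + (2/|x|)∂_r with ∂_r = (x/|x|)·∇ the radial derivative. -/
open MeasureTheory

noncomputable section

/-- Radial derivative ∂_r f(x) = (x/|x|)·∇f(x). -/
def radialDeriv {n : ℕ} (f : EuclideanSpace ℝ (Fin n) → ℂ) (x : EuclideanSpace ℝ (Fin n)) : ℂ :=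
  fderiv ℝ f x ((‖x‖⁻¹ : ℝ) • x)

/-- The Laplacian Δf = ∑ ∂_j² f. -/
def laplacian {n : ℕ} (f : EuclideanSpace ℝ (Fin n) → ℂ) (x : EuclideanSpace ℝ (Fin n)) : ℂ :=
  ∑ i : Fin n, fderiv ℝ (fun y => fderiv ℝ f y (EuclideanSpace.single i 1)) x
    (EuclideanSpace.single i 1)

/-- The radial part Δ_r = ∂_r² + ((n-1)/|x|) ∂_r of the Laplacian. -/
def radialLaplacian {n : ℕ} (f : EuclideanSpace ℝ (Fin n) → ℂ) (x : EuclideanSpace ℝ (Fin n)) : ℂ :=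
  radialDeriv (radialDeriv f) x + ((((n : ℝ) - 1) / ‖x‖ : ℝ) : ℂ) * radialDeriv f x

/-- The spherical part Δ_s = Δ - Δ_r = |x|⁻² Δ_{S^{n-1}} of the Laplacian. -/
def sphericalLaplacian {n : ℕ} (f : EuclideanSpace ℝ (Fin n) → ℂ)
    (x : EuclideanSpace ℝ (Fin n)) : ℂ :=
  laplacian f x - radialLaplacian f x

/-- Spherical derivative L_j = ∂_j - (x_j/|x|) ∂_r. -/
def sphDeriv {n : ℕ} (j : Fin n) (f : EuclideanSpace ℝ (Fin n) → ℂ)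
    (x : EuclideanSpace ℝ (Fin n)) : ℂ :=
  fderiv ℝ f x (EuclideanSpace.single j 1) - ((x j / ‖x‖ : ℝ) : ℂ) * radialDeriv f x

/-- f ∈ C₀^∞(ℝⁿ \ {0}): smooth with compact support avoiding the origin. -/
def IsTestFun {n : ℕ} (f : EuclideanSpace ℝ (Fin n) → ℂ) : Prop :=
  ContDiff ℝ (⊤ : ℕ∞) f ∧ HasCompactSupport f ∧ (0 : EuclideanSpace ℝ (Fin n)) ∉ tsupport f

open Set Metric Measure


lemma indicator_eq_of_supp {F : ℝ → ℝ} {a b c d : ℝ} (hc : 0 < c) (hca : c ≤ a) (hbd : b ≤ d)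
    (h0 : ∀ r, 0 < r → r ∉ Icc a b → F r = 0) :
    Set.indicator (Ioi (0:ℝ)) F = Set.indicator (Icc c d) F := by
  funext r
  by_cases hr : r ∈ Ioi (0:ℝ)
  · rw [indicator_of_mem hr]
    by_cases hr2 : r ∈ Icc c d
    · rw [indicator_of_mem hr2]
    · rw [indicator_of_notMem hr2]
      exact h0 r hr (fun hab => hr2 ⟨hca.trans hab.1, hab.2.trans hbd⟩)
  · rw [indicator_of_notMem hr, indicator_of_notMem (fun h2 => hr (hc.trans_le h2.1))]

lemma integrableOn_of_supp {F : ℝ → ℝ} {a b c d : ℝ} (hF : ContinuousOn F (Ioi 0)) (hc : 0 < c)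
    (hca : c ≤ a) (hbd : b ≤ d) (h0 : ∀ r, 0 < r → r ∉ Icc a b → F r = 0) :
    IntegrableOn F (Ioi (0:ℝ)) := by
  rw [← integrable_indicator_iff measurableSet_Ioi,
    indicator_eq_of_supp hc hca hbd h0, integrable_indicator_iff measurableSet_Icc]
  exact (hF.mono (fun r hr => hc.trans_le hr.1)).integrableOn_compact isCompact_Icc

lemma setIntegral_eq_of_supp {F : ℝ → ℝ} {a b c d : ℝ} (hc : 0 < c)
    (hca : c ≤ a) (hbd : b ≤ d) (h0 : ∀ r, 0 < r → r ∉ Icc a b → F r = 0) :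
    ∫ r in Ioi (0:ℝ), F r = ∫ r in Icc c d, F r := by
  rw [← integral_indicator measurableSet_Ioi, indicator_eq_of_supp hc hca hbd h0,
    integral_indicator measurableSet_Icc]

lemma real_rellich_1d (h u w : ℝ → ℝ) (hhc : Continuous h) (huc : Continuous u)
    (hwc : Continuous w)
    (hd1 : ∀ r, HasDerivAt h (u r) r) (hd2 : ∀ r, HasDerivAt u (w r) r)
    {a b : ℝ} (ha : 0 < a) (hab : a ≤ b)
    (hsupp : ∀ r, 0 < r → r ∉ Icc a b → h r = 0) :
    (∫ r in Ioi (0:ℝ), w r ^ 2) ≥ (9/16) * ∫ r in Ioi (0:ℝ), h r ^ 2 / r ^ 4 := by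
  have vanish : ∀ (f g : ℝ → ℝ), (∀ r, HasDerivAt f (g r) r) →
      (∀ r, 0 < r → r ∉ Icc a b → f r = 0) → ∀ r, 0 < r → r ∉ Icc a b → g r = 0 := by
    intro f g hd hf r hr hrn
    have hopen : IsOpen (Ioi (0:ℝ) \ Icc a b) := isOpen_Ioi.sdiff isClosed_Icc
    have hev : f =ᶠ[nhds r] fun _ => (0:ℝ) := by
      filter_upwards [hopen.mem_nhds ⟨hr, hrn⟩] with s hs using hf s hs.1 hs.2
    rw [← (hd r).deriv, hev.deriv_eq, deriv_const]
  have husupp := vanish h u hd1 hsupp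
  have hwsupp := vanish u w hd2 husupp
  set c : ℝ := a / 2 with hcdef
  set d : ℝ := b + 1 with hddef
  have hc : 0 < c := half_pos ha
  have hca : c < a := half_lt_self ha
  have hbd : b < d := lt_add_one b
  have hcd : c ≤ d := (hca.le.trans hab).trans hbd.le
  have hcm : c ∉ Icc a b := fun hmem => absurd hmem.1 (not_le.mpr hca)
  have hdm : d ∉ Icc a b := fun hmem => absurd hmem.2 (not_le.mpr hbd)
  have hIcc_sub : Icc c d ⊆ Ioi (0:ℝ) := fun r hr => hc.trans_le hr.1
  have hne : ∀ r ∈ uIcc c d, r ≠ 0 := by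
    intro r hr
    rw [uIcc_of_le hcd] at hr
    exact (hc.trans_le hr.1).ne'
  -- the quantities
  set H : ℝ → ℝ := fun r => h r ^ 2 / r ^ 4 with hHdef
  set A : ℝ → ℝ := fun r => (w r - (1/2) * u r * r⁻¹)^2 with hAdef
  set B : ℝ → ℝ := fun r => (u r * r⁻¹ - (3/2) * h r * r⁻¹^2)^2 with hBdef
  set D : ℝ → ℝ := fun r => (1/2) * u r^2 * r⁻¹ + (3/8) * h r^2 * r⁻¹^3 with hDdef
  set D' : ℝ → ℝ := fun r => u r * w r * r⁻¹ - (1/2) * u r^2 * r⁻¹^2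
      + (3/4) * h r * u r * r⁻¹^3 - (9/8) * h r^2 * r⁻¹^4 with hD'def
  have hDderiv : ∀ r : ℝ, r ≠ 0 → HasDerivAt D (D' r) r := by
    intro r hr
    have h1 : HasDerivAt (fun s : ℝ => s⁻¹) (-(r^2)⁻¹) r := hasDerivAt_inv hr
    have hu2 : HasDerivAt (fun s => u s ^ 2) (2 * u r ^ 1 * w r) r := (hd2 r).pow 2
    have hh2 : HasDerivAt (fun s => h s ^ 2) (2 * h r ^ 1 * u r) r := (hd1 r).pow 2
    have h3 : HasDerivAt (fun s : ℝ => s⁻¹ ^ 3) (3 * r⁻¹ ^ 2 * (-(r^2)⁻¹)) r := h1.pow 3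
    have t1 : HasDerivAt (fun s => (1/2 : ℝ) * u s ^ 2 * s⁻¹)
        ((1/2) * (2 * u r ^ 1 * w r) * r⁻¹ + (1/2) * u r ^ 2 * (-(r^2)⁻¹)) r :=
      (hu2.const_mul (1/2 : ℝ)).mul h1
    have t2 : HasDerivAt (fun s => (3/8 : ℝ) * h s ^ 2 * s⁻¹ ^ 3)
        ((3/8) * (2 * h r ^ 1 * u r) * r⁻¹^3 + (3/8) * h r ^ 2 * (3 * r⁻¹ ^ 2 * (-(r^2)⁻¹))) r :=
      (hh2.const_mul (3/8 : ℝ)).mul h3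
    have := t1.add t2
    refine (this.congr_deriv ?_ : HasDerivAt _ (D' r) r)
    simp only [hD'def]
    field_simp
    ring
  have hDc : D c = 0 := by
    simp only [hDdef, husupp c hc hcm, hsupp c hc hcm]
    ring
  have hDd : D d = 0 := by
    have hd0 : 0 < d := hc.trans_le (hcd)
    simp only [hDdef, husupp d hd0 hdm, hsupp d hd0 hdm]
    ring
  -- interval integrability
  have hinv : ContinuousOn (fun r : ℝ => r⁻¹) (uIcc c d) :=
    continuousOn_inv₀.mono (fun r hr => hne r hr)
  have hcontD' : ContinuousOn D' (uIcc c d) := by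
    exact ((((huc.continuousOn.mul hwc.continuousOn).mul hinv).sub
      ((continuousOn_const.mul ((huc.continuousOn).pow 2)).mul (hinv.pow 2))).add
      (((continuousOn_const.mul hhc.continuousOn).mul huc.continuousOn).mul (hinv.pow 3))).sub
      ((continuousOn_const.mul ((hhc.continuousOn).pow 2)).mul (hinv.pow 4))
  have hcontAB : ContinuousOn (fun r => A r + (1/4) * B r) (uIcc c d) := by
    apply ContinuousOn.add
    · exact ((hwc.continuousOn.sub ((continuousOn_const.mul huc.continuousOn).mul hinv)).pow 2)
    · exact continuousOn_const.mul
        (((huc.continuousOn.mul hinv).sub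
          ((continuousOn_const.mul hhc.continuousOn).mul (hinv.pow 2))).pow 2)
  have hcontW : ContinuousOn (fun r => w r ^ 2) (uIcc c d) := (hwc.continuousOn.pow 2)
  have hcontH : ContinuousOn H (uIcc c d) := by
    apply ContinuousOn.div ((hhc.continuousOn).pow 2) (continuousOn_pow 4)
    intro r hr
    exact pow_ne_zero 4 (hne r hr)
  -- FTC
  have hFTC : ∫ r in c..d, D' r = 0 := by
    rw [intervalIntegral.integral_eq_sub_of_hasDerivAt
      (fun r hr => hDderiv r (hne r hr)) (hcontD'.intervalIntegrable)]
    rw [hDc, hDd, sub_zero]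
  -- pointwise identity
  have hpt : ∀ r ∈ uIcc c d, w r ^ 2 - (9/16) * H r = (A r + (1/4) * B r) + D' r := by
    intro r hr
    have hr0 : r ≠ 0 := hne r hr
    simp only [hAdef, hBdef, hD'def, hHdef]
    field_simp
    ring
  -- main interval inequality
  have hIW : (∫ r in c..d, (w r ^ 2)) - (9/16) * (∫ r in c..d, H r) ≥ 0 := by
    have hsplit : (∫ r in c..d, (w r ^ 2)) - (9/16) * (∫ r in c..d, H r)
        = ∫ r in c..d, (w r ^ 2 - (9/16) * H r) := by
      rw [intervalIntegral.integral_sub hcontW.intervalIntegrable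
        ((hcontH.intervalIntegrable).const_mul _)]
      congr 1
      rw [intervalIntegral.integral_const_mul]
    rw [hsplit, intervalIntegral.integral_congr hpt,
      intervalIntegral.integral_add hcontAB.intervalIntegrable hcontD'.intervalIntegrable, hFTC,
      add_zero]
    apply intervalIntegral.integral_nonneg hcd
    intro r _
    positivity
  -- convert set integrals
  have hIoiIcc : ∀ F : ℝ → ℝ, ∫ r in Icc c d, F r = ∫ r in c..d, F r := by
    intro F
    rw [intervalIntegral.integral_of_le hcd, ← integral_Icc_eq_integral_Ioc]
  have hWsupp' : ∀ r, 0 < r → r ∉ Icc a b → w r ^ 2 = 0 := by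
    intro r hr hrn; rw [hwsupp r hr hrn]; ring
  have hHsupp' : ∀ r, 0 < r → r ∉ Icc a b → H r = 0 := by
    intro r hr hrn; simp only [hHdef, hsupp r hr hrn]; ring_nf
  have hintW : IntegrableOn (fun r => w r ^ 2) (Ioi (0:ℝ)) :=
    integrableOn_of_supp (hwc.pow 2).continuousOn hc hca.le hbd.le hWsupp'
  have step1 : ∫ r in Ioi (0:ℝ), w r ^ 2 ≥ ∫ r in Icc c d, w r ^ 2 := by
    apply setIntegral_mono_set hintW
    · filter_upwards with r using sq_nonneg _
    · exact HasSubset.Subset.eventuallyLE hIcc_sub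
  have step2 : ∫ r in Ioi (0:ℝ), H r = ∫ r in Icc c d, H r :=
    setIntegral_eq_of_supp hc hca.le hbd.le hHsupp'
  calc (∫ r in Ioi (0:ℝ), w r ^ 2) ≥ ∫ r in Icc c d, w r ^ 2 := step1
    _ ≥ (9/16) * ∫ r in Icc c d, H r := by
        rw [hIoiIcc (fun r => w r ^ 2), hIoiIcc H]; linarith [hIW]
    _ = (9/16) * ∫ r in Ioi (0:ℝ), H r := by rw [step2]

lemma vanish_on_open {V : Type*} [NormedAddCommGroup V] [NormedSpace ℝ V] {s : Set ℝ}
    (hs : IsOpen s) (g g' : ℝ → V) (hd : ∀ r, HasDerivAt g (g' r) r)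
    (h0 : ∀ r ∈ s, g r = 0) : ∀ r ∈ s, g' r = 0 := by
  intro r hr
  have hev : g =ᶠ[nhds r] fun _ => (0:V) := by
    filter_upwards [hs.mem_nhds hr] with y hy using h0 y hy
  rw [← (hd r).deriv, hev.deriv_eq, deriv_const]

lemma radialDeriv_contDiffAt {n : ℕ} {f : EuclideanSpace ℝ (Fin n) → ℂ} (hf : ContDiff ℝ (⊤ : ℕ∞) f)
    {x : EuclideanSpace ℝ (Fin n)} (hx : x ≠ 0) : ContDiffAt ℝ (⊤ : ℕ∞) (radialDeriv f) x := by
  have h1 : ContDiff ℝ (⊤ : ℕ∞) (fderiv ℝ f) := hf.fderiv_right (by simp)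
  have hnorm : ContDiffAt ℝ (⊤ : ℕ∞) (fun y : EuclideanSpace ℝ (Fin n) => ‖y‖) x :=
    contDiffAt_id.norm ℝ hx
  have hne : ‖x‖ ≠ 0 := norm_ne_zero_iff.mpr hx
  exact (h1.contDiffAt).clm_apply ((hnorm.inv hne).smul contDiffAt_id)

lemma radialDeriv_eq_zero_of {n : ℕ} {f : EuclideanSpace ℝ (Fin n) → ℂ} {s : Set (EuclideanSpace ℝ (Fin n))}
    (hs : IsOpen s) (h0 : ∀ y ∈ s, f y = 0) {x} (hx : x ∈ s) : radialDeriv f x = 0 := by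
  have hev : f =ᶠ[nhds x] fun _ => (0:ℂ) := by
    filter_upwards [hs.mem_nhds hx] with y hy using h0 y hy
  have : fderiv ℝ f x = 0 := by rw [hev.fderiv_eq, fderiv_fun_const]; rfl
  unfold radialDeriv
  rw [this, ContinuousLinearMap.zero_apply]

set_option maxHeartbeats 1000000 in
lemma ray_ineq {f : EuclideanSpace ℝ (Fin 3) → ℂ} (hf : ContDiff ℝ (⊤ : ℕ∞) f)
    (ω : EuclideanSpace ℝ (Fin 3)) (hω : ‖ω‖ = 1)
    {a b : ℝ} (ha : 0 < a) (hab : a ≤ b)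
    (hshell : ∀ r : ℝ, 0 < r → r ∉ Icc a b → f (r • ω) = 0) :
    (∫ r in Ioi (0:ℝ), r^2 * ‖radialLaplacian f (r • ω)‖^2)
      ≥ (9/16) * ∫ r in Ioi (0:ℝ), r^2 * (‖f (r • ω)‖^2 / r^4) := by
  -- ray derivatives
  have hray : ∀ r : ℝ, HasDerivAt (fun s : ℝ => s • ω) ω r := by
    intro r; simpa using (hasDerivAt_id r).smul_const ω
  set φ : ℝ → ℂ := fun r => f (r • ω) with hφdef
  set φ' : ℝ → ℂ := fun r => fderiv ℝ f (r • ω) ω with hφ'def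
  set F₂ : EuclideanSpace ℝ (Fin 3) → ℂ := fun x => fderiv ℝ f x ω with hF₂def
  set F₃ : EuclideanSpace ℝ (Fin 3) → ℂ := fun x => fderiv ℝ F₂ x ω with hF₃def
  set φ'' : ℝ → ℂ := fun r => F₃ (r • ω) with hφ''def
  have hfd : Differentiable ℝ f := hf.differentiable (by simp)
  have hF₂c : ContDiff ℝ (⊤ : ℕ∞) F₂ := (hf.fderiv_right (by simp)).clm_apply contDiff_const
  have hF₂d : Differentiable ℝ F₂ := hF₂c.differentiable (by simp)
  have hF₃c : ContDiff ℝ (⊤ : ℕ∞) F₃ := (hF₂c.fderiv_right (by simp)).clm_apply contDiff_const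
  have hdφ : ∀ r, HasDerivAt φ (φ' r) r := by
    intro r
    exact ((hfd (r • ω)).hasFDerivAt).comp_hasDerivAt r (hray r)
  have hdφ' : ∀ r, HasDerivAt φ' (φ'' r) r := by
    intro r
    exact ((hF₂d (r • ω)).hasFDerivAt).comp_hasDerivAt r (hray r)
  -- unit direction facts
  have hunit : ∀ r : ℝ, 0 < r → (‖r • ω‖⁻¹ : ℝ) • (r • ω) = ω := by
    intro r hr
    rw [norm_smul, hω, mul_one, Real.norm_eq_abs, abs_of_pos hr, smul_smul,
      inv_mul_cancel₀ hr.ne', one_smul]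
  have hnorm_smul : ∀ r : ℝ, 0 < r → ‖r • ω‖ = r := by
    intro r hr
    rw [norm_smul, hω, mul_one, Real.norm_eq_abs, abs_of_pos hr]
  have hrd1 : ∀ r : ℝ, 0 < r → radialDeriv f (r • ω) = φ' r := by
    intro r hr
    unfold radialDeriv
    rw [hunit r hr]
  have hrd2 : ∀ r : ℝ, 0 < r → radialDeriv (radialDeriv f) (r • ω) = φ'' r := by
    intro r hr
    have hx0 : (r • ω) ≠ 0 := by
      intro h
      have := hnorm_smul r hr
      rw [h, norm_zero] at this
      exact hr.ne this
    have hdiff : DifferentiableAt ℝ (radialDeriv f) (r • ω) :=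
      (radialDeriv_contDiffAt hf hx0).differentiableAt (by simp)
    have hcomp : HasDerivAt (fun s : ℝ => radialDeriv f (s • ω))
        (fderiv ℝ (radialDeriv f) (r • ω) ω) r :=
      by have := hdiff.hasFDerivAt.comp_hasDerivAt r (hray r); exact this
    have hev : (fun s : ℝ => radialDeriv f (s • ω)) =ᶠ[nhds r] φ' := by
      filter_upwards [isOpen_Ioi.mem_nhds (show r ∈ Ioi (0:ℝ) from hr)] with s hs
      exact hrd1 s hs
    have hcomp' : HasDerivAt φ' (fderiv ℝ (radialDeriv f) (r • ω) ω) r :=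
      hcomp.congr_of_eventuallyEq hev.symm
    have huniq : fderiv ℝ (radialDeriv f) (r • ω) ω = φ'' r := hcomp'.unique (hdφ' r)
    calc radialDeriv (radialDeriv f) (r • ω)
        = fderiv ℝ (radialDeriv f) (r • ω) ((‖r • ω‖⁻¹ : ℝ) • (r • ω)) := rfl
      _ = fderiv ℝ (radialDeriv f) (r • ω) ω := by rw [hunit r hr]
      _ = φ'' r := huniq
  have hrl : ∀ r : ℝ, 0 < r → radialLaplacian f (r • ω) = φ'' r + ((2 / r : ℝ) : ℂ) * φ' r := by
    intro r hr
    unfold radialLaplacian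
    rw [hrd1 r hr, hrd2 r hr, hnorm_smul r hr]
    norm_num
  -- the function g and its derivatives
  set g : ℝ → ℂ := fun r => (r : ℂ) * φ r with hgdef
  set g' : ℝ → ℂ := fun r => φ r + (r : ℂ) * φ' r with hg'def
  set g'' : ℝ → ℂ := fun r => 2 * φ' r + (r : ℂ) * φ'' r with hg''def
  have hofReal : ∀ r : ℝ, HasDerivAt (fun s : ℝ => (s : ℂ)) 1 r := by
    intro r
    simpa using (hasDerivAt_id r).ofReal_comp
  have hdg : ∀ r, HasDerivAt g (g' r) r := by
    intro r
    have := (hofReal r).mul (hdφ r)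
    refine (this.congr_deriv ?_ : HasDerivAt _ (g' r) r)
    simp only [hg'def]
    ring
  have hdg' : ∀ r, HasDerivAt g' (g'' r) r := by
    intro r
    have := (hdφ r).add ((hofReal r).mul (hdφ' r))
    refine (this.congr_deriv ?_ : HasDerivAt _ (g'' r) r)
    simp only [hg''def]
    ring
  -- g'' = r * radialLaplacian on the ray
  have hg''eq : ∀ r : ℝ, 0 < r → g'' r = (r : ℂ) * radialLaplacian f (r • ω) := by
    intro r hr
    rw [hrl r hr]
    have : (r : ℂ) ≠ 0 := by exact_mod_cast hr.ne'
    simp only [hg''def]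
    push_cast
    field_simp
    ring
  -- real and imaginary parts
  have hnormsq : ∀ z : ℂ, ‖z‖^2 = z.re^2 + z.im^2 := by
    intro z
    rw [Complex.sq_norm, Complex.normSq_apply]
    ring
  set h₁ : ℝ → ℝ := fun r => (g r).re with hh₁def
  set u₁ : ℝ → ℝ := fun r => (g' r).re with hu₁def
  set w₁ : ℝ → ℝ := fun r => (g'' r).re with hw₁def
  set h₂ : ℝ → ℝ := fun r => (g r).im with hh₂def
  set u₂ : ℝ → ℝ := fun r => (g' r).im with hu₂def
  set w₂ : ℝ → ℝ := fun r => (g'' r).im with hw₂def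
  have hcφ : Continuous φ := hf.continuous.comp (continuous_id.smul continuous_const)
  have hcφ' : Continuous φ' := (hF₂c.continuous).comp (continuous_id.smul continuous_const)
  have hcφ'' : Continuous φ'' := (hF₃c.continuous).comp (continuous_id.smul continuous_const)
  have hcg : Continuous g := (Complex.continuous_ofReal).mul hcφ
  have hcg' : Continuous g' := hcφ.add ((Complex.continuous_ofReal).mul hcφ')
  have hcg'' : Continuous g'' := (continuous_const.mul hcφ').add
    ((Complex.continuous_ofReal).mul hcφ'')
  have hd₁ : ∀ r, HasDerivAt h₁ (u₁ r) r := fun r =>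
    (Complex.reCLM.hasFDerivAt).comp_hasDerivAt r (hdg r)
  have hd₁' : ∀ r, HasDerivAt u₁ (w₁ r) r := fun r =>
    (Complex.reCLM.hasFDerivAt).comp_hasDerivAt r (hdg' r)
  have hd₂ : ∀ r, HasDerivAt h₂ (u₂ r) r := fun r =>
    (Complex.imCLM.hasFDerivAt).comp_hasDerivAt r (hdg r)
  have hd₂' : ∀ r, HasDerivAt u₂ (w₂ r) r := fun r =>
    (Complex.imCLM.hasFDerivAt).comp_hasDerivAt r (hdg' r)
  have hgsupp : ∀ r, 0 < r → r ∉ Icc a b → g r = 0 := by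
    intro r hr hrn
    simp only [hgdef, hφdef, hshell r hr hrn, mul_zero]
  have hsupp₁ : ∀ r, 0 < r → r ∉ Icc a b → h₁ r = 0 := by
    intro r hr hrn; simp only [hh₁def, hgsupp r hr hrn, Complex.zero_re]
  have hsupp₂ : ∀ r, 0 < r → r ∉ Icc a b → h₂ r = 0 := by
    intro r hr hrn; simp only [hh₂def, hgsupp r hr hrn, Complex.zero_im]
  -- the two real inequalities
  have hineq₁ := real_rellich_1d h₁ u₁ w₁ (Complex.continuous_re.comp hcg)
    (Complex.continuous_re.comp hcg') (Complex.continuous_re.comp hcg'')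
    hd₁ hd₁' ha hab hsupp₁
  have hineq₂ := real_rellich_1d h₂ u₂ w₂ (Complex.continuous_im.comp hcg)
    (Complex.continuous_im.comp hcg') (Complex.continuous_im.comp hcg'')
    hd₂ hd₂' ha hab hsupp₂
  -- support of derivative stuff
  have hopen : IsOpen (Ioi (0:ℝ) \ Icc a b) := isOpen_Ioi.sdiff isClosed_Icc
  have hgsupp' : ∀ r ∈ Ioi (0:ℝ) \ Icc a b, g r = 0 := fun r hr => hgsupp r hr.1 hr.2
  have hg'supp := vanish_on_open hopen g g' hdg hgsupp'
  have hg''supp := vanish_on_open hopen g' g'' hdg' hg'supp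
  -- rewrite LHS
  have hLHS : ∫ r in Ioi (0:ℝ), r^2 * ‖radialLaplacian f (r • ω)‖^2
      = ∫ r in Ioi (0:ℝ), (w₁ r ^ 2 + w₂ r ^ 2) := by
    apply setIntegral_congr_fun measurableSet_Ioi
    intro r hr
    show r ^ 2 * ‖radialLaplacian f (r • ω)‖ ^ 2 = w₁ r ^ 2 + w₂ r ^ 2
    have hr' : (0:ℝ) < r := hr
    have : (r:ℂ) * radialLaplacian f (r • ω) = g'' r := (hg''eq r hr').symm
    have hnn : ‖g'' r‖^2 = r^2 * ‖radialLaplacian f (r • ω)‖^2 := by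
      rw [← this, norm_mul, Complex.norm_real, Real.norm_eq_abs, abs_of_pos hr', mul_pow]
    rw [← hnn, hnormsq (g'' r)]
  have hRHS : ∫ r in Ioi (0:ℝ), r^2 * (‖f (r • ω)‖^2 / r^4)
      = ∫ r in Ioi (0:ℝ), (h₁ r ^ 2 / r^4 + h₂ r ^ 2 / r^4) := by
    apply setIntegral_congr_fun measurableSet_Ioi
    intro r hr
    show r ^ 2 * (‖f (r • ω)‖ ^ 2 / r ^ 4) = h₁ r ^ 2 / r ^ 4 + h₂ r ^ 2 / r ^ 4
    have hr' : (0:ℝ) < r := hr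
    have hgr : ‖g r‖^2 = r^2 * ‖f (r • ω)‖^2 := by
      simp only [hgdef]
      rw [norm_mul, Complex.norm_real, Real.norm_eq_abs, abs_of_pos hr', mul_pow]
    have : r^2 * (‖f (r • ω)‖^2 / r^4) = ‖g r‖^2 / r^4 := by
      rw [hgr]; ring
    rw [this, hnormsq (g r)]
    simp only [hh₁def, hh₂def]
    ring
  -- integrability
  have hiW₁ : IntegrableOn (fun r => w₁ r ^ 2) (Ioi (0:ℝ)) := by
    refine integrableOn_of_supp (a := a) (b := b) (c := a) (d := b) ?_ ha le_rfl le_rfl ?_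
    · exact ((Complex.continuous_re.comp hcg'').pow 2).continuousOn
    intro r hr hrn
    show w₁ r ^ 2 = 0
    simp only [hw₁def, hg''supp r ⟨hr, hrn⟩, Complex.zero_re]
    ring
  have hiW₂ : IntegrableOn (fun r => w₂ r ^ 2) (Ioi (0:ℝ)) := by
    refine integrableOn_of_supp (a := a) (b := b) (c := a) (d := b) ?_ ha le_rfl le_rfl ?_
    · exact ((Complex.continuous_im.comp hcg'').pow 2).continuousOn
    intro r hr hrn
    show w₂ r ^ 2 = 0
    simp only [hw₂def, hg''supp r ⟨hr, hrn⟩, Complex.zero_im]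
    ring
  have hcont4 : ContinuousOn (fun r : ℝ => r ^ 4) (Ioi (0:ℝ)) := continuousOn_pow 4
  have hne4 : ∀ r ∈ Ioi (0:ℝ), r ^ 4 ≠ 0 := fun r hr => pow_ne_zero 4 (ne_of_gt hr)
  have hiH₁ : IntegrableOn (fun r => h₁ r ^ 2 / r ^ 4) (Ioi (0:ℝ)) := by
    refine integrableOn_of_supp (a := a) (b := b) (c := a) (d := b) ?_ ha le_rfl le_rfl ?_
    · exact (((Complex.continuous_re.comp hcg).pow 2).continuousOn.div hcont4 hne4)
    intro r hr hrn
    show h₁ r ^ 2 / r ^ 4 = 0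
    rw [hsupp₁ r hr hrn]
    ring
  have hiH₂ : IntegrableOn (fun r => h₂ r ^ 2 / r ^ 4) (Ioi (0:ℝ)) := by
    refine integrableOn_of_supp (a := a) (b := b) (c := a) (d := b) ?_ ha le_rfl le_rfl ?_
    · exact (((Complex.continuous_im.comp hcg).pow 2).continuousOn.div hcont4 hne4)
    intro r hr hrn
    show h₂ r ^ 2 / r ^ 4 = 0
    rw [hsupp₂ r hr hrn]
    ring
  calc (∫ r in Ioi (0:ℝ), r^2 * ‖radialLaplacian f (r • ω)‖^2)
      = ∫ r in Ioi (0:ℝ), (w₁ r ^ 2 + w₂ r ^ 2) := hLHS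
    _ = (∫ r in Ioi (0:ℝ), w₁ r ^ 2) + ∫ r in Ioi (0:ℝ), w₂ r ^ 2 := integral_add hiW₁ hiW₂
    _ ≥ (9/16) * (∫ r in Ioi (0:ℝ), h₁ r ^ 2 / r ^ 4)
        + (9/16) * ∫ r in Ioi (0:ℝ), h₂ r ^ 2 / r ^ 4 := by
        exact add_le_add hineq₁ hineq₂
    _ = (9/16) * ((∫ r in Ioi (0:ℝ), h₁ r ^ 2 / r ^ 4)
        + ∫ r in Ioi (0:ℝ), h₂ r ^ 2 / r ^ 4) := by ring
    _ = (9/16) * ∫ r in Ioi (0:ℝ), (h₁ r ^ 2 / r ^ 4 + h₂ r ^ 2 / r ^ 4) := by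
        rw [integral_add hiH₁ hiH₂]
    _ = (9/16) * ∫ r in Ioi (0:ℝ), r^2 * (‖f (r • ω)‖^2 / r^4) := by rw [hRHS]

lemma radialDeriv_contDiffOn {n : ℕ} {g : EuclideanSpace ℝ (Fin n) → ℂ}
    (hg : ContDiffOn ℝ (⊤ : ℕ∞) g {(0 : EuclideanSpace ℝ (Fin n))}ᶜ) :
    ContDiffOn ℝ (⊤ : ℕ∞) (radialDeriv g) {(0 : EuclideanSpace ℝ (Fin n))}ᶜ := by
  have hopen : IsOpen ({(0 : EuclideanSpace ℝ (Fin n))}ᶜ) := isOpen_compl_singleton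
  rw [hopen.contDiffOn_iff] at hg ⊢
  intro x hx
  have hx0 : x ≠ 0 := hx
  have h1 : ContDiffAt ℝ (⊤ : ℕ∞) (fderiv ℝ g) x := (hg hx).fderiv_right (by simp)
  have hnorm : ContDiffAt ℝ (⊤ : ℕ∞) (fun y : EuclideanSpace ℝ (Fin n) => ‖y‖) x :=
    contDiffAt_id.norm ℝ hx0
  exact h1.clm_apply ((hnorm.inv (norm_ne_zero_iff.mpr hx0)).smul contDiffAt_id)

lemma polar_decomp (F : EuclideanSpace ℝ (Fin 3) → ℝ) (hF : Integrable F) :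
    ((∫ x, F x) = ∫ ω : sphere (0 : EuclideanSpace ℝ (Fin 3)) 1,
        (∫ r in Ioi (0:ℝ), r ^ 2 • F (r • (ω : EuclideanSpace ℝ (Fin 3)))) ∂(volume.toSphere))
    ∧ Integrable (fun ω : sphere (0 : EuclideanSpace ℝ (Fin 3)) 1 =>
        ∫ r in Ioi (0:ℝ), r ^ 2 • F (r • (ω : EuclideanSpace ℝ (Fin 3)))) volume.toSphere := by
  have hdim : Module.finrank ℝ (EuclideanSpace ℝ (Fin 3)) = 3 := finrank_euclideanSpace_fin
  set μ : Measure (EuclideanSpace ℝ (Fin 3)) := volume with hμdef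
  have hmp := μ.measurePreserving_homeomorphUnitSphereProd
  rw [hdim] at hmp
  have h2 : (3:ℕ) - 1 = 2 := rfl
  rw [h2] at hmp
  set G : sphere (0:EuclideanSpace ℝ (Fin 3)) 1 × Ioi (0:ℝ) → ℝ := fun p => F ((p.2 : ℝ) • (p.1 : EuclideanSpace ℝ (Fin 3))) with hGdef
  have hGe : ∀ x : ({0}ᶜ : Set (EuclideanSpace ℝ (Fin 3))), G (homeomorphUnitSphereProd (EuclideanSpace ℝ (Fin 3)) x) = F x := by
    intro x
    simp only [hGdef, homeomorphUnitSphereProd_apply_fst_coe,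
      homeomorphUnitSphereProd_apply_snd_coe]
    rw [smul_inv_smul₀ (norm_ne_zero_iff.mpr (Set.mem_compl_singleton_iff.mp x.2))]
  have hFsub : Integrable (fun x : ({0}ᶜ : Set (EuclideanSpace ℝ (Fin 3))) => F x) (μ.comap Subtype.val) := by
    have hiff := (MeasurableEmbedding.subtype_coe
      (measurableSet_singleton (0:EuclideanSpace ℝ (Fin 3))).compl).integrableOn_iff_comap
      (f := F) (μ := μ) (s := {(0:EuclideanSpace ℝ (Fin 3))}ᶜ) (by rw [Subtype.range_coe])
    rw [Subtype.coe_preimage_self, integrableOn_univ] at hiff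
    exact hiff.mp hF.integrableOn
  have hGint : Integrable G (μ.toSphere.prod (volumeIoiPow 2)) := by
    rw [← hmp.integrable_comp_emb (Homeomorph.measurableEmbedding _)]
    exact hFsub.congr (Filter.Eventually.of_forall (fun x => (hGe x).symm))
  have e1 : ∫ x : ({0}ᶜ : Set (EuclideanSpace ℝ (Fin 3))), F x ∂(μ.comap Subtype.val) = ∫ x, F x ∂μ := by
    rw [integral_subtype_comap (measurableSet_singleton (0:EuclideanSpace ℝ (Fin 3))).compl (fun x => F x),
      restrict_compl_singleton]
  have e2 : ∫ p, G p ∂(μ.toSphere.prod (volumeIoiPow 2))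
      = ∫ x : ({0}ᶜ : Set (EuclideanSpace ℝ (Fin 3))), F x ∂(μ.comap Subtype.val) := by
    rw [← hmp.integral_comp (Homeomorph.measurableEmbedding _) G]
    exact integral_congr_ae (Filter.Eventually.of_forall hGe)
  have e3 := integral_prod G hGint
  have e4 : ∀ ω : sphere (0:EuclideanSpace ℝ (Fin 3)) 1, (∫ r, G (ω, r) ∂(volumeIoiPow 2))
      = ∫ r in Ioi (0:ℝ), r ^ 2 • F (r • (ω:EuclideanSpace ℝ (Fin 3))) := by
    intro ω
    simp only [Measure.volumeIoiPow, ENNReal.ofReal]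
    rw [integral_withDensity_eq_integral_smul
        ((measurable_subtype_coe.pow_const _).real_toNNReal)
        (fun r : Ioi (0:ℝ) => F ((r:ℝ) • (ω:EuclideanSpace ℝ (Fin 3)))),
      integral_subtype_comap measurableSet_Ioi
        (fun a : ℝ => Real.toNNReal (a ^ 2) • F (a • (ω:EuclideanSpace ℝ (Fin 3))))]
    refine setIntegral_congr_fun measurableSet_Ioi (fun r hr => ?_)
    rw [NNReal.smul_def, Real.coe_toNNReal _ (pow_nonneg (le_of_lt hr) _)]
  constructor
  · rw [← e1, ← e2, e3]
    exact integral_congr_ae (Filter.Eventually.of_forall (fun ω => e4 ω))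
  · exact (hGint.integral_prod_left).congr (Filter.Eventually.of_forall (fun ω => e4 ω))

/-- Radial Rellich inequality in dimension 3:
    ‖Δ_r f‖₂² ≥ (9/16) ‖f/|x|²‖₂². -/
theorem radial_rellich_dim3 (f : EuclideanSpace ℝ (Fin 3) → ℂ) (hf : IsTestFun f) :
    ∫ x, ‖radialLaplacian f x‖ ^ 2 ≥ (9 / 16 : ℝ) * ∫ x, ‖f x‖ ^ 2 / ‖x‖ ^ 4 := by

  obtain ⟨hsm, hcs, h0⟩ := hf

  set K : EuclideanSpace ℝ (Fin 3) → ℝ := fun x => ‖radialLaplacian f x‖ ^ 2 with hKdef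
  set I : EuclideanSpace ℝ (Fin 3) → ℝ := fun x => ‖f x‖ ^ 2 / ‖x‖ ^ 4 with hIdef
  have hsopen : IsOpen ((tsupport f)ᶜ) := (isClosed_tsupport f).isOpen_compl
  have hf0 : ∀ y ∈ (tsupport f)ᶜ, f y = 0 := fun y hy => image_eq_zero_of_notMem_tsupport hy
  have hrd0 : ∀ y ∈ (tsupport f)ᶜ, radialDeriv f y = 0 :=
    fun y hy => radialDeriv_eq_zero_of hsopen hf0 hy
  have hrd20 : ∀ y ∈ (tsupport f)ᶜ, radialDeriv (radialDeriv f) y = 0 :=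
    fun y hy => radialDeriv_eq_zero_of hsopen hrd0 hy
  have hrl0 : ∀ y ∈ (tsupport f)ᶜ, radialLaplacian f y = 0 := by
    intro y hy
    unfold radialLaplacian
    rw [hrd20 y hy, hrd0 y hy, mul_zero, add_zero]
  have hfOn : ContDiffOn ℝ (⊤ : ℕ∞) f ({(0:EuclideanSpace ℝ (Fin 3))}ᶜ) := hsm.contDiffOn
  have hrdOn := radialDeriv_contDiffOn hfOn
  have hrd2On := radialDeriv_contDiffOn hrdOn
  have hmem : ∀ x : EuclideanSpace ℝ (Fin 3), x ≠ 0 → ({(0:EuclideanSpace ℝ (Fin 3))}ᶜ : Set (EuclideanSpace ℝ (Fin 3))) ∈ nhds x :=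
    fun x hx => isOpen_compl_singleton.mem_nhds hx
  -- continuity
  have hrlCont : ∀ x : EuclideanSpace ℝ (Fin 3), x ≠ 0 → ContinuousAt (radialLaplacian f) x := by
    intro x hx0
    have c1 : ContinuousAt (radialDeriv (radialDeriv f)) x :=
      (hrd2On.contDiffAt (hmem x hx0)).continuousAt
    have c2 : ContinuousAt (radialDeriv f) x := (hrdOn.contDiffAt (hmem x hx0)).continuousAt
    have c3 : ContinuousAt (fun y : EuclideanSpace ℝ (Fin 3) => ((((3:ℕ):ℝ) - 1) / ‖y‖ : ℝ)) x :=
      continuousAt_const.div continuous_norm.continuousAt (norm_ne_zero_iff.mpr hx0)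
    exact c1.add ((Complex.continuous_ofReal.continuousAt.comp c3).mul c2)
  have hKcont : Continuous K := by
    rw [continuous_iff_continuousAt]
    intro x
    by_cases hx : x ∈ tsupport f
    · have hx0 : x ≠ 0 := fun h => h0 (h ▸ hx)
      exact ((hrlCont x hx0).norm.pow 2)
    · have hev : K =ᶠ[nhds x] fun _ => 0 := by
        filter_upwards [hsopen.mem_nhds hx] with y hy
        simp [hKdef, hrl0 y hy]
      exact continuousAt_const.congr hev.symm
  have hIcont : Continuous I := by
    rw [continuous_iff_continuousAt]
    intro x
    by_cases hx : x ∈ tsupport f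
    · have hx0 : x ≠ 0 := fun h => h0 (h ▸ hx)
      exact ContinuousAt.div ((hsm.continuous.norm.pow 2).continuousAt)
        ((continuous_norm.pow 4).continuousAt) (pow_ne_zero 4 (norm_ne_zero_iff.mpr hx0))
    · have hev : I =ᶠ[nhds x] fun _ => 0 := by
        filter_upwards [hsopen.mem_nhds hx] with y hy
        simp [hIdef, hf0 y hy]
      exact continuousAt_const.congr hev.symm
  -- integrability
  have hKsupp : HasCompactSupport K := by
    apply IsCompact.of_isClosed_subset hcs isClosed_closure
    apply closure_minimal _ (isClosed_tsupport f)
    intro y hy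
    by_contra hyn
    exact hy (by simp [hKdef, hrl0 y hyn])
  have hIsupp : HasCompactSupport I := by
    apply IsCompact.of_isClosed_subset hcs isClosed_closure
    apply closure_minimal _ (isClosed_tsupport f)
    intro y hy
    by_contra hyn
    exact hy (by simp [hIdef, hf0 y hyn])
  have hKint : Integrable K := hKcont.integrable_of_hasCompactSupport hKsupp
  have hIint : Integrable I := hIcont.integrable_of_hasCompactSupport hIsupp
  -- shell bounds
  obtain ⟨ε, hε, hball⟩ : ∃ ε > 0, ball (0:EuclideanSpace ℝ (Fin 3)) ε ⊆ (tsupport f)ᶜ :=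
    Metric.isOpen_iff.mp hsopen 0 h0
  obtain ⟨R, hR⟩ := hcs.isBounded.subset_closedBall (0:EuclideanSpace ℝ (Fin 3))
  set b : ℝ := max ε R with hbdef
  have hεb : ε ≤ b := le_max_left _ _
  -- per-direction inequality
  have hray : ∀ ω : sphere (0:EuclideanSpace ℝ (Fin 3)) 1,
      (∫ r in Ioi (0:ℝ), r ^ 2 • K (r • (ω:EuclideanSpace ℝ (Fin 3))))
        ≥ (9/16 : ℝ) * ∫ r in Ioi (0:ℝ), r ^ 2 • I (r • (ω:EuclideanSpace ℝ (Fin 3))) := by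
    intro ω
    have hω1 : ‖(ω:EuclideanSpace ℝ (Fin 3))‖ = 1 := by simpa using mem_sphere_zero_iff_norm.mp ω.2
    have hnr : ∀ r : ℝ, 0 < r → ‖r • (ω:EuclideanSpace ℝ (Fin 3))‖ = r := by
      intro r hr
      rw [norm_smul, hω1, mul_one, Real.norm_eq_abs, abs_of_pos hr]
    have hshell : ∀ r : ℝ, 0 < r → r ∉ Icc ε b → f (r • (ω:EuclideanSpace ℝ (Fin 3))) = 0 := by
      intro r hr hrn
      rcases lt_or_ge r ε with hlt | hge
      · refine image_eq_zero_of_notMem_tsupport (hball ?_)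
        rw [mem_ball_zero_iff, hnr r hr]
        exact hlt
      · have hbr : b < r := lt_of_not_ge (fun h => hrn ⟨hge, h⟩)
        refine image_eq_zero_of_notMem_tsupport (fun hmem => ?_)
        have := hR hmem
        rw [mem_closedBall_zero_iff, hnr r hr] at this
        exact absurd this (not_le.mpr (lt_of_le_of_lt (le_max_right ε R) hbr))
    have hKray : (∫ r in Ioi (0:ℝ), r ^ 2 • K (r • (ω:EuclideanSpace ℝ (Fin 3))))
        = ∫ r in Ioi (0:ℝ), r ^ 2 * ‖radialLaplacian f (r • (ω:EuclideanSpace ℝ (Fin 3)))‖ ^ 2 := by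
      refine setIntegral_congr_fun measurableSet_Ioi (fun r hr => ?_)
      show r ^ 2 • K (r • (ω:EuclideanSpace ℝ (Fin 3))) = r ^ 2 * ‖radialLaplacian f (r • (ω:EuclideanSpace ℝ (Fin 3)))‖ ^ 2
      rw [smul_eq_mul, hKdef]
    have hIray : (∫ r in Ioi (0:ℝ), r ^ 2 • I (r • (ω:EuclideanSpace ℝ (Fin 3))))
        = ∫ r in Ioi (0:ℝ), r ^ 2 * (‖f (r • (ω:EuclideanSpace ℝ (Fin 3)))‖ ^ 2 / r ^ 4) := by
      refine setIntegral_congr_fun measurableSet_Ioi (fun r hr => ?_)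
      show r ^ 2 • I (r • (ω:EuclideanSpace ℝ (Fin 3))) = r ^ 2 * (‖f (r • (ω:EuclideanSpace ℝ (Fin 3)))‖ ^ 2 / r ^ 4)
      rw [smul_eq_mul, hIdef]
      simp only
      rw [hnr r hr]
    rw [hKray, hIray]
    exact ray_ineq hsm (ω:EuclideanSpace ℝ (Fin 3)) hω1 hε hεb hshell
  obtain ⟨eK, iK⟩ := polar_decomp K hKint
  obtain ⟨eI, iI⟩ := polar_decomp I hIint
  show (∫ x, K x) ≥ (9/16 : ℝ) * ∫ x, I x
  rw [eK, eI, ← integral_const_mul]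
  exact integral_mono (iI.const_mul _) iK (fun ω => hray ω)

end
end

section
/- For λ > 0, R < 0, the function α(λ) = 1 − R²(1/λ + 1/R)² attains its maximum over a set of positive values {λ_k} at the point λ_{k₀} minimizing |1/λ + 1/R| over the set; in particular if λ_k = k(k+1) and R = −3/4, then k₀ = 1 and the resulting sharp constant is (λ₁/(λ₁+R))² = (2/(2−3/4))² = (8/5)², giving the Evans–Lewis constant (5/8)² = 25/64 after inversion. -/
open MeasureTheory

noncomputable section

/-- Optimization over the eigenvalues λ_k = k(k+1) with R = -3/4: the maximum of
    α(λ) = 1 - R²(1/λ + 1/R)² is attained at k₀ = 1 (λ₁ = 2), the resulting sharp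
    constant is (λ₁/(λ₁+R))² = (8/5)², and (5/8)² = 25/64. -/
theorem optimization_lemma :
    (∀ k : ℕ, 1 ≤ k →
      1 - (-3 / 4 : ℝ) ^ 2 * (1 / ((k : ℝ) * ((k : ℝ) + 1)) + 1 / (-3 / 4)) ^ 2 ≤
        1 - (-3 / 4 : ℝ) ^ 2 * (1 / ((1 : ℝ) * ((1 : ℝ) + 1)) + 1 / (-3 / 4)) ^ 2) ∧
    (1 / (1 - (1 - (-3 / 4 : ℝ) ^ 2 * (1 / ((1 : ℝ) * ((1 : ℝ) + 1)) + 1 / (-3 / 4)) ^ 2)) =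
      ((2 : ℝ) / (2 + (-3 / 4))) ^ 2) ∧
    ((2 : ℝ) / (2 + (-3 / 4))) ^ 2 = (8 / 5 : ℝ) ^ 2 ∧
    ((5 / 8 : ℝ) ^ 2 = 25 / 64) := by
  refine ⟨?_, by norm_num, by norm_num, by norm_num⟩
  intro k hk
  have hk1 : (1 : ℝ) ≤ (k : ℝ) := by exact_mod_cast hk
  have hpos : (0 : ℝ) < (k : ℝ) * ((k : ℝ) + 1) := by nlinarith
  have hle : 1 / ((k : ℝ) * ((k : ℝ) + 1)) ≤ 1 / 2 := by
    apply one_div_le_one_div_of_le (by norm_num)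
    nlinarith
  have hgt : 0 < 1 / ((k : ℝ) * ((k : ℝ) + 1)) := by positivity
  nlinarith [sq_nonneg (1 / ((k : ℝ) * ((k : ℝ) + 1)) - 1/2)]
end
end

section
/- For f ∈ C₀^∞(ℝ³ \ {0}) and each k ≥ 1, the cross term satisfies 2Re⟨Δ_r P_k f, Δ̃_s P_k f⟩ ≥ 2R₃λ_k ‖P_k f/|x|²‖₂² with R₃ = −3/4, where Δ̃_s = |x|^{−2}Λ and P_k is the spectral projection with −ΛP_k = λ_k P_k. -/
open MeasureTheory

noncomputable section

open Metric Set

local notation "E3" => EuclideanSpace ℝ (Fin 3)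

lemma integral_fderiv_apply_eq_zero {f : E3 → ℝ} (hf : ContDiff ℝ 1 f)
    (hcs : HasCompactSupport f) (v : E3) : ∫ x, fderiv ℝ f x v = 0 := by
  obtain ⟨C, hC⟩ := (hcs.fderiv ℝ).exists_bound_of_continuous (hf.continuous_fderiv one_ne_zero)
  have hLf : LipschitzWith C.toNNReal f := by
    apply lipschitzWith_of_nnnorm_fderiv_le (hf.differentiable one_ne_zero)
    intro x
    rw [← norm_toNNReal]
    exact Real.toNNReal_mono (hC x)
  set K₁ : Set E3 := Metric.cthickening 1 (insert 0 (tsupport f)) with hK₁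
  have hK₁c : IsCompact K₁ := (hcs.insert 0).cthickening
  have hK₁ne : K₁.Nonempty := ⟨0, self_subset_cthickening _ (mem_insert _ _)⟩
  set g : E3 → ℝ := fun x => max (1 - infDist x K₁) 0 with hgdef
  have hLg : LipschitzWith 1 g := by
    have h1 : LipschitzWith 1 fun x : E3 => infDist x K₁ := lipschitz_infDist_pt K₁
    have h2 : LipschitzWith 1 fun x : E3 => 1 - infDist x K₁ := by
      simpa using (LipschitzWith.const (1:ℝ)).sub h1
    simpa using h2.max_const 0
  have hg1 : ∀ x ∈ K₁, g x = 1 := by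
    intro x hx
    simp [hgdef, infDist_zero_of_mem hx]
  have htsub : tsupport f ⊆ K₁ :=
    (subset_insert 0 _).trans (self_subset_cthickening _)
  have hgsupp : HasCompactSupport g := by
    apply HasCompactSupport.intro hK₁c.cthickening
    intro x hx
    have hge : 1 ≤ infDist x K₁ := by
      by_contra h
      push_neg at h
      obtain ⟨y, hy, hxy⟩ := (infDist_lt_iff hK₁ne).1 h
      exact hx (mem_cthickening_of_dist_le x y 1 K₁ hy hxy.le)
    simp only [hgdef]
    rw [max_eq_right (by linarith)]
  have key := hLf.integral_lineDeriv_mul_eq hLg hgsupp v (μ := volume)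
  have e1 : (fun x => lineDeriv ℝ f x v * g x) = fun x => fderiv ℝ f x v := by
    funext x
    rw [(hf.differentiable one_ne_zero x).lineDeriv_eq_fderiv]
    by_cases hx : x ∈ tsupport f
    · rw [hg1 x (htsub hx), mul_one]
    · have hev : ∀ᶠ y in nhds x, f y = (fun _ => (0:ℝ)) y :=
        Filter.eventually_of_mem ((isClosed_tsupport f).isOpen_compl.mem_nhds hx)
          (fun y hy => image_eq_zero_of_notMem_tsupport hy)
      have : fderiv ℝ f x = fderiv ℝ (fun _ => (0:ℝ)) x := Filter.EventuallyEq.fderiv_eq hev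
      rw [this]
      simp
  have e2 : (fun x => lineDeriv ℝ g x (-v) * f x) = fun _ => (0:ℝ) := by
    funext x
    by_cases hfx : f x = 0
    · simp [hfx]
    · have hx : x ∈ tsupport f := subset_tsupport f (by simpa [Function.mem_support] using hfx)
      have hball : ∀ y ∈ ball x 1, g y = 1 := by
        intro y hy
        apply hg1
        exact mem_cthickening_of_dist_le y x 1 _ (mem_insert_iff.2 (Or.inr hx))
          (le_of_lt (mem_ball.1 hy))
      have hc : ContinuousAt (fun t : ℝ => x + t • (-v)) 0 := by fun_prop
      have hmem : (fun t : ℝ => x + t • (-v)) ⁻¹' (ball x 1) ∈ nhds (0:ℝ) := by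
        apply hc.preimage_mem_nhds
        simpa using ball_mem_nhds x one_pos
      have hev : (fun t : ℝ => g (x + t • (-v))) =ᶠ[nhds (0:ℝ)] fun _ => (1:ℝ) := by
        filter_upwards [hmem] with t ht
        exact hball _ ht
      have : lineDeriv ℝ g x (-v) = 0 := by
        rw [lineDeriv, hev.deriv_eq, deriv_const]
      rw [this, zero_mul]
  rw [e1, e2] at key
  rw [key]
  simp


-- glue lemma
lemma glue_contDiff {α : Type*} [NormedAddCommGroup α] [NormedSpace ℝ α]
    {φ : E3 → α} {n : WithTop ℕ∞} {ε : ℝ} (hε : 0 < ε)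
    (h1 : ∀ x : E3, x ≠ 0 → ContDiffAt ℝ n φ x)
    (h0 : ∀ x ∈ Metric.ball (0:E3) ε, φ x = 0) : ContDiff ℝ n φ := by
  rw [contDiff_iff_contDiffAt]
  intro x
  by_cases hx : x = 0
  · subst hx
    apply (contDiffAt_const (c := (0:α))).congr_of_eventuallyEq
    filter_upwards [ball_mem_nhds (0:E3) hε] with y hy
    exact h0 y hy
  · exact h1 x hx

lemma norm_hasFDerivAt {x : E3} (hx : x ≠ 0) :
    HasFDerivAt (fun y : E3 => ‖y‖) ((‖x‖⁻¹ : ℝ) • (innerSL ℝ x)) x := by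
  have hsq : HasFDerivAt (fun y : E3 => ‖y‖ ^ 2) (2 • (innerSL ℝ x)) x :=
    (hasStrictFDerivAt_norm_sq x).hasFDerivAt
  have hn : ‖x‖ ≠ 0 := norm_ne_zero_iff.2 hx
  have hne : ‖x‖ ^ 2 ≠ 0 := pow_ne_zero 2 hn
  have hsqrt := (Real.hasDerivAt_sqrt hne).comp_hasFDerivAt x hsq
  simp only [Function.comp_def] at hsqrt
  have h1 : (fun y : E3 => Real.sqrt (‖y‖ ^ 2)) = fun y : E3 => ‖y‖ := by
    funext y; rw [Real.sqrt_sq (norm_nonneg y)]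
  rw [h1] at hsqrt
  refine hsqrt.congr_fderiv ?_
  rw [Real.sqrt_sq (norm_nonneg x)]
  ext w
  simp only [ContinuousLinearMap.coe_smul', Pi.smul_apply, ContinuousLinearMap.smul_apply,
    two_smul, smul_eq_mul, ContinuousLinearMap.add_apply]
  field_simp
  ring

lemma single_eval (x : E3) (i : Fin 3) :
    ((‖x‖⁻¹ : ℝ) • (innerSL ℝ x)) (EuclideanSpace.single i (1:ℝ)) = ‖x‖⁻¹ * x i := by
  simp only [ContinuousLinearMap.smul_apply, smul_eq_mul, innerSL_apply_apply]
  rw [EuclideanSpace.inner_single_right]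
  simp [mul_comm]

lemma sum_single_decomp (x : E3) :
    ∑ i : Fin 3, x i • EuclideanSpace.single i (1:ℝ) = x := by
  have := (EuclideanSpace.basisFun (Fin 3) ℝ).sum_repr x
  simpa [EuclideanSpace.basisFun_apply, EuclideanSpace.basisFun_repr] using this

lemma ae_ne_zero : ∀ᵐ x : E3, x ≠ 0 := by
  have h : volume ({0} : Set E3) = 0 := measure_singleton 0
  rw [ae_iff]
  convert h using 2
  ext x
  simp

lemma sum_sq_coords (x : E3) : ∑ i : Fin 3, (x i)^2 = ‖x‖^2 := by
  rw [EuclideanSpace.norm_eq, Real.sq_sqrt (by positivity)]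
  simp [sq_abs]

lemma radial_ibp (F : E3 → ℝ) {ε : ℝ} (hε : 0 < ε)
    (hF : ∀ x : E3, x ≠ 0 → ContDiffAt ℝ (⊤ : ℕ∞) F x)
    (h0 : ∀ x ∈ Metric.ball (0:E3) ε, F x = 0)
    (hcs : HasCompactSupport F) :
    ∫ x, fderiv ℝ F x ((‖x‖⁻¹ : ℝ) • x) = -2 * ∫ x, F x * ‖x‖⁻¹ := by
  have hFz : ∀ x : E3, x ∉ tsupport F → F x = 0 := fun x hx => image_eq_zero_of_notMem_tsupport hx
  have hFz' : ∀ x : E3, x ∉ tsupport F → fderiv ℝ F x = 0 := by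
    intro x hx
    have hev : F =ᶠ[nhds x] (fun _ => (0:ℝ)) :=
      Filter.eventually_of_mem ((isClosed_tsupport F).isOpen_compl.mem_nhds hx)
        (fun y hy => hFz y hy)
    rw [hev.fderiv_eq, fderiv_fun_const]
    rfl
  have hFzb : ∀ x ∈ Metric.ball (0:E3) ε, fderiv ℝ F x = 0 := by
    intro x hx
    have hev : F =ᶠ[nhds x] (fun _ => (0:ℝ)) :=
      Filter.eventually_of_mem (isOpen_ball.mem_nhds hx) (fun y hy => h0 y hy)
    rw [hev.fderiv_eq, fderiv_fun_const]
    rfl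
  set G : Fin 3 → E3 → ℝ := fun i y => F y * (y i * ‖y‖⁻¹) with hGdef
  have hGsm : ∀ i, ContDiff ℝ (⊤ : ℕ∞) (G i) := by
    intro i
    apply glue_contDiff hε
    · intro x hx
      have hn : ‖x‖ ≠ 0 := norm_ne_zero_iff.2 hx
      have hproj : ContDiffAt ℝ (⊤ : ℕ∞) (fun y : E3 => y i) x :=
        (EuclideanSpace.proj (𝕜 := ℝ) i).contDiff.contDiffAt
      exact (hF x hx).mul (hproj.mul ((contDiffAt_norm ℝ hx).inv hn))
    · intro x hx
      rw [hGdef]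
      simp [h0 x hx]
  have hGcs : ∀ i, HasCompactSupport (G i) := by
    intro i
    apply HasCompactSupport.intro hcs
    intro x hx
    simp [hGdef, hFz x hx]
  have hInt0 : ∀ i, ∫ x, fderiv ℝ (G i) x (EuclideanSpace.single i (1:ℝ)) = 0 := fun i =>
    integral_fderiv_apply_eq_zero ((hGsm i).of_le (by simp)) (hGcs i) _
  -- integrability of summands
  have hDcont : ∀ i, Continuous (fun x => fderiv ℝ (G i) x (EuclideanSpace.single i (1:ℝ))) := by
    intro i
    have h1 : Continuous (fderiv ℝ (G i)) := ((hGsm i).fderiv_right (m := (⊤ : ℕ∞)) (by simp)).continuous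
    exact (ContinuousLinearMap.apply ℝ ℝ (EuclideanSpace.single i (1:ℝ))).continuous.comp h1
  have hDcs : ∀ i, HasCompactSupport (fun x => fderiv ℝ (G i) x (EuclideanSpace.single i (1:ℝ))) := by
    intro i
    exact ((hGcs i).fderiv ℝ).comp_left (g := fun L : E3 →L[ℝ] ℝ => L (EuclideanSpace.single i 1)) rfl
  have hDint : ∀ i, Integrable (fun x => fderiv ℝ (G i) x (EuclideanSpace.single i (1:ℝ))) :=
    fun i => (hDcont i).integrable_of_hasCompactSupport (hDcs i)
  -- pointwise identity
  have hpt : ∀ x : E3, x ≠ 0 →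
      ∑ i, fderiv ℝ (G i) x (EuclideanSpace.single i (1:ℝ)) =
        fderiv ℝ F x ((‖x‖⁻¹ : ℝ) • x) + 2 * (F x * ‖x‖⁻¹) := by
    intro x hx
    have hn : ‖x‖ ≠ 0 := norm_ne_zero_iff.2 hx
    have hNorm := norm_hasFDerivAt hx
    set N := (‖x‖⁻¹ : ℝ) • (innerSL ℝ x) with hNdef
    have hinv : HasFDerivAt (fun y : E3 => ‖y‖⁻¹) ((-(‖x‖^2)⁻¹) • N) x :=
      (hasDerivAt_inv hn).comp_hasFDerivAt x hNorm
    have hFd : HasFDerivAt F (fderiv ℝ F x) x :=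
      ((hF x hx).differentiableAt (by simp)).hasFDerivAt
    have hGd : ∀ i, fderiv ℝ (G i) x =
        F x • ((x i : ℝ) • ((-(‖x‖^2)⁻¹) • N) + (‖x‖⁻¹ : ℝ) • (EuclideanSpace.proj (𝕜 := ℝ) i : E3 →L[ℝ] ℝ))
          + (x i * ‖x‖⁻¹) • fderiv ℝ F x := by
      intro i
      have hproji : HasFDerivAt (fun y : E3 => y i) (EuclideanSpace.proj (𝕜 := ℝ) i : E3 →L[ℝ] ℝ) x :=
        (EuclideanSpace.proj (𝕜 := ℝ) i).hasFDerivAt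
      exact (hFd.mul (hproji.mul hinv)).fderiv
    have heval : ∀ i, fderiv ℝ (G i) x (EuclideanSpace.single i (1:ℝ)) =
        F x * (x i * (-(‖x‖^2)⁻¹ * (‖x‖⁻¹ * x i)) + ‖x‖⁻¹)
          + (x i * ‖x‖⁻¹) * fderiv ℝ F x (EuclideanSpace.single i (1:ℝ)) := by
      intro i
      rw [hGd i]
      simp only [ContinuousLinearMap.add_apply, ContinuousLinearMap.smul_apply, smul_eq_mul,
        ContinuousLinearMap.neg_apply]
      rw [single_eval x i]
      simp [PiLp.proj_apply, EuclideanSpace.single_apply]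
    have hradial : fderiv ℝ F x ((‖x‖⁻¹ : ℝ) • x) =
        ∑ i, (x i * ‖x‖⁻¹) * fderiv ℝ F x (EuclideanSpace.single i (1:ℝ)) := by
      have hdec : ∑ i : Fin 3, ((‖x‖⁻¹ : ℝ) * x i) • EuclideanSpace.single i (1:ℝ)
          = ((‖x‖⁻¹ : ℝ) • x) := by
        calc ∑ i : Fin 3, ((‖x‖⁻¹ : ℝ) * x i) • EuclideanSpace.single i (1:ℝ)
            = ∑ i : Fin 3, (‖x‖⁻¹ : ℝ) • (x i • EuclideanSpace.single i (1:ℝ)) := by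
              apply Finset.sum_congr rfl
              intro i _
              rw [smul_smul]
          _ = (‖x‖⁻¹ : ℝ) • ∑ i : Fin 3, x i • EuclideanSpace.single i (1:ℝ) :=
              (Finset.smul_sum).symm
          _ = (‖x‖⁻¹ : ℝ) • x := by rw [sum_single_decomp]
      rw [← hdec, map_sum]
      apply Finset.sum_congr rfl
      intro i _
      rw [_root_.map_smul, smul_eq_mul]
      ring
    rw [Finset.sum_congr rfl (fun i _ => heval i), Finset.sum_add_distrib, ← hradial]
    have hsum2 : ∑ i, F x * (x i * (-(‖x‖^2)⁻¹ * (‖x‖⁻¹ * x i)) + ‖x‖⁻¹) = 2 * (F x * ‖x‖⁻¹) := by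
      rw [← Finset.mul_sum]
      have hinner : ∑ i : Fin 3, (x i * (-(‖x‖^2)⁻¹ * (‖x‖⁻¹ * x i)) + ‖x‖⁻¹) = 2 * ‖x‖⁻¹ := by
        rw [Finset.sum_add_distrib]
        have h1 : ∑ i : Fin 3, x i * (-(‖x‖ ^ 2)⁻¹ * (‖x‖⁻¹ * x i)) =
            (∑ i : Fin 3, (x i)^2) * (-(‖x‖ ^ 2)⁻¹ * ‖x‖⁻¹) := by
          rw [Finset.sum_mul]
          apply Finset.sum_congr rfl
          intro i _
          ring
        rw [h1, sum_sq_coords]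
        simp only [Finset.sum_const, Finset.card_univ, Fintype.card_fin, nsmul_eq_mul]
        field_simp
        ring
      rw [hinner]
      ring
    rw [hsum2]
    ring
  -- integrability of the two pieces
  have hcont1 : Continuous (fun x : E3 => fderiv ℝ F x ((‖x‖⁻¹ : ℝ) • x)) := by
    rw [← contDiff_zero (𝕜 := ℝ) (f := fun x : E3 => fderiv ℝ F x ((‖x‖⁻¹ : ℝ) • x))]
    apply glue_contDiff hε
    · intro x hx
      have hn : ‖x‖ ≠ 0 := norm_ne_zero_iff.2 hx
      have h1 : ContDiffAt ℝ 0 (fderiv ℝ F) x := by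
        have := (hF x hx).fderiv_right (m := 0) (by simp)
        exact this
      exact h1.clm_apply (((contDiffAt_norm ℝ hx).inv hn).smul contDiffAt_id)
    · intro x hx
      rw [hFzb x hx]
      rfl
  have hcont2 : Continuous (fun x : E3 => F x * ‖x‖⁻¹) := by
    rw [← contDiff_zero (𝕜 := ℝ) (f := fun x : E3 => F x * ‖x‖⁻¹)]
    apply glue_contDiff hε
    · intro x hx
      have hn : ‖x‖ ≠ 0 := norm_ne_zero_iff.2 hx
      exact (hF x hx).of_le le_rfl |>.mul ((contDiffAt_norm ℝ hx).inv hn) |>.of_le (by simp)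
    · intro x hx
      simp [h0 x hx]
  have hint1 : Integrable (fun x : E3 => fderiv ℝ F x ((‖x‖⁻¹ : ℝ) • x)) := by
    apply hcont1.integrable_of_hasCompactSupport
    apply HasCompactSupport.intro hcs
    intro x hx
    rw [hFz' x hx]
    rfl
  have hint2 : Integrable (fun x : E3 => F x * ‖x‖⁻¹) := by
    apply hcont2.integrable_of_hasCompactSupport
    apply HasCompactSupport.intro hcs
    intro x hx
    simp [hFz x hx]
  -- assemble
  have hsum : ∫ x, ∑ i, fderiv ℝ (G i) x (EuclideanSpace.single i (1:ℝ)) = 0 := by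
    rw [integral_finset_sum _ (fun i _ => hDint i)]
    simp [hInt0]
  have hae : (fun x : E3 => ∑ i, fderiv ℝ (G i) x (EuclideanSpace.single i (1:ℝ)))
      =ᵐ[volume] fun x => fderiv ℝ F x ((‖x‖⁻¹ : ℝ) • x) + 2 * (F x * ‖x‖⁻¹) := by
    filter_upwards [ae_ne_zero] with x hx
    exact hpt x hx
  rw [integral_congr_ae hae, integral_add hint1 (hint2.const_mul 2), integral_const_mul] at hsum
  linarith

-- small complex lemmas
lemma re_conj_mul (a b : ℂ) : ((starRingEnd ℂ) a * b).re = a.re * b.re + a.im * b.im := by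
  simp [Complex.mul_re]

lemma re_conj_mul_self (a : ℂ) : ((starRingEnd ℂ) a * a).re = ‖a‖ ^ 2 := by
  rw [re_conj_mul, Complex.sq_norm, Complex.normSq_apply]

lemma re_le_norm_mul (a b : ℂ) : ((starRingEnd ℂ) a * b).re ≤ ‖a‖ * ‖b‖ := by
  calc ((starRingEnd ℂ) a * b).re ≤ ‖(starRingEnd ℂ) a * b‖ := Complex.re_le_norm _
    _ = ‖a‖ * ‖b‖ := by rw [norm_mul, Complex.norm_conj]

set_option maxHeartbeats 1000000 in
/-- Cross-term lower bound: if -Λ P_k = λ_k P_k with λ_k ≥ 0 and Δ̃_s = |x|⁻²Λ,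
    then 2 Re⟨Δ_r P_k f, Δ̃_s P_k f⟩ ≥ 2 R₃ λ_k ‖P_k f/|x|²‖₂² with R₃ = -3/4. -/
theorem cross_term_lower_bound (g : EuclideanSpace ℝ (Fin 3) → ℂ) (hg : IsTestFun g)
    (lam : ℝ) (hlam : 0 ≤ lam)
    (Ss : EuclideanSpace ℝ (Fin 3) → ℂ)
    (hSs : ∀ x : EuclideanSpace ℝ (Fin 3), x ≠ 0 →
      Ss x = -(((lam / ‖x‖ ^ 2 : ℝ)) : ℂ) * g x) :
    2 * (∫ x, (starRingEnd ℂ) (radialLaplacian g x) * Ss x).re ≥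
      2 * (-3 / 4) * lam * ∫ x, ‖g x‖ ^ 2 / ‖x‖ ^ 4 := by
  obtain ⟨hsm, hcs, h0⟩ := hg
  obtain ⟨ε, hε, hball⟩ := Metric.mem_nhds_iff.1
    ((isClosed_tsupport g).isOpen_compl.mem_nhds h0)
  set S := tsupport g with hSdef
  set v : E3 → ℂ := radialDeriv g with hvdef
  set w : E3 → ℂ := radialDeriv v with hwdef
  -- vanishing facts
  have hgz : ∀ x : E3, x ∉ S → g x = 0 := fun x hx => image_eq_zero_of_notMem_tsupport hx
  have hgev : ∀ x : E3, x ∉ S → g =ᶠ[nhds x] (fun _ => (0:ℂ)) := by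
    intro x hx
    exact Filter.eventually_of_mem ((isClosed_tsupport g).isOpen_compl.mem_nhds hx)
      (fun y hy => hgz y hy)
  have hvz : ∀ x : E3, x ∉ S → v x = 0 := by
    intro x hx
    have : fderiv ℝ g x = 0 := by rw [(hgev x hx).fderiv_eq, fderiv_fun_const]; rfl
    simp [hvdef, radialDeriv, this]
  have hvev : ∀ x : E3, x ∉ S → v =ᶠ[nhds x] (fun _ => (0:ℂ)) := by
    intro x hx
    exact Filter.eventually_of_mem ((isClosed_tsupport g).isOpen_compl.mem_nhds hx)
      (fun y hy => hvz y hy)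
  have hwz : ∀ x : E3, x ∉ S → w x = 0 := by
    intro x hx
    have : fderiv ℝ v x = 0 := by rw [(hvev x hx).fderiv_eq, fderiv_fun_const]; rfl
    simp [hwdef, radialDeriv, this]
  have hballz : ∀ x ∈ Metric.ball (0:E3) ε, x ∉ S := fun x hx => hball hx
  -- smoothness of v, w away from 0
  have hDg : ContDiff ℝ (⊤ : ℕ∞) (fun y : E3 => fderiv ℝ g y) := hsm.fderiv_right (m := (⊤ : ℕ∞)) (by simp)
  have hunit : ∀ x : E3, x ≠ 0 → ContDiffAt ℝ (⊤ : ℕ∞) (fun y : E3 => (‖y‖⁻¹ : ℝ) • y) x := by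
    intro x hx
    have hn : ‖x‖ ≠ 0 := norm_ne_zero_iff.2 hx
    exact ((contDiffAt_norm ℝ hx).inv hn).smul contDiffAt_id
  have hvsm : ∀ x : E3, x ≠ 0 → ContDiffAt ℝ (⊤ : ℕ∞) v x := by
    intro x hx
    exact hDg.contDiffAt.clm_apply (hunit x hx)
  have hwsm : ∀ x : E3, x ≠ 0 → ContDiffAt ℝ (⊤ : ℕ∞) w x := by
    intro x hx
    have h1 : ContDiffAt ℝ (⊤ : ℕ∞) (fun y : E3 => fderiv ℝ v y) x :=
      (hvsm x hx).fderiv_right (m := (⊤ : ℕ∞)) (by simp)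
    exact h1.clm_apply (hunit x hx)
  -- integrands
  set P : E3 → ℝ := fun x => ((starRingEnd ℂ) (v x) * g x).re with hPdef
  set fI : E3 → ℝ := fun x => ‖g x‖ ^ 2 / ‖x‖ ^ 4 with hfIdef
  set fJ : E3 → ℝ := fun x => ‖v x‖ ^ 2 / ‖x‖ ^ 2 with hfJdef
  set fK : E3 → ℝ := fun x => P x / ‖x‖ ^ 3 with hfKdef
  set fM : E3 → ℝ := fun x => ((starRingEnd ℂ) (w x) * g x).re / ‖x‖ ^ 2 with hfMdef
  -- integrability helper
  have hIntAux : ∀ φ : E3 → ℝ, (∀ x : E3, x ≠ 0 → ContDiffAt ℝ (⊤ : ℕ∞) φ x) →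
      (∀ x : E3, x ∉ S → φ x = 0) → Integrable φ := by
    intro φ hcd hz
    have hco : Continuous φ := by
      rw [← contDiff_zero (𝕜 := ℝ)]
      apply glue_contDiff hε
      · intro x hx; exact (hcd x hx).of_le (by simp)
      · intro x hx; exact hz x (hballz x hx)
    exact hco.integrable_of_hasCompactSupport (HasCompactSupport.intro hcs hz)
  have hIntAuxC : ∀ φ : E3 → ℂ, (∀ x : E3, x ≠ 0 → ContDiffAt ℝ (⊤ : ℕ∞) φ x) →
      (∀ x : E3, x ∉ S → φ x = 0) → Integrable φ := by
    intro φ hcd hz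
    have hco : Continuous φ := by
      rw [← contDiff_zero (𝕜 := ℝ)]
      apply glue_contDiff hε
      · intro x hx; exact (hcd x hx).of_le (by simp)
      · intro x hx; exact hz x (hballz x hx)
    exact hco.integrable_of_hasCompactSupport (HasCompactSupport.intro hcs hz)
  have hgsmAt : ∀ x : E3, ContDiffAt ℝ (⊤ : ℕ∞) g x := fun x => hsm.contDiffAt
  have hnormsm : ∀ (x : E3) (k : ℕ), x ≠ 0 → ContDiffAt ℝ (⊤ : ℕ∞) (fun y : E3 => (‖y‖ ^ k)⁻¹) x := by
    intro x k hx
    have hn : ‖x‖ ≠ 0 := norm_ne_zero_iff.2 hx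
    exact ((contDiffAt_norm ℝ hx).pow k).inv (pow_ne_zero k hn)
  have hconjsm : ∀ (φ : E3 → ℂ) (x : E3), ContDiffAt ℝ (⊤ : ℕ∞) φ x →
      ContDiffAt ℝ (⊤ : ℕ∞) (fun y => (starRingEnd ℂ) (φ y)) x := by
    intro φ x hφ
    have : ContDiff ℝ (⊤ : ℕ∞) (fun z : ℂ => (starRingEnd ℂ) z) :=
      Complex.conjCLE.toContinuousLinearMap.contDiff
    exact this.comp_contDiffAt x hφ
  have hresm : ∀ (φ : E3 → ℂ) (x : E3), ContDiffAt ℝ (⊤ : ℕ∞) φ x →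
      ContDiffAt ℝ (⊤ : ℕ∞) (fun y => (φ y).re) x := by
    intro φ x hφ
    exact Complex.reCLM.contDiff.comp_contDiffAt x hφ
  -- integrability of all integrands
  have hIint : Integrable fI := by
    apply hIntAux
    · intro x hx
      have := hresm _ x ((hconjsm g x (hgsmAt x)).mul (hgsmAt x))
      have h2 : ContDiffAt ℝ (⊤ : ℕ∞) (fun y : E3 => ‖g y‖ ^ 2) x := by
        apply this.congr_of_eventuallyEq
        filter_upwards with y
        rw [re_conj_mul_self]
      simpa [hfIdef, div_eq_mul_inv] using h2.mul (hnormsm x 4 hx)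
    · intro x hx; simp [hfIdef, hgz x hx]
  have hJint : Integrable fJ := by
    apply hIntAux
    · intro x hx
      have := hresm _ x ((hconjsm v x (hvsm x hx)).mul (hvsm x hx))
      have h2 : ContDiffAt ℝ (⊤ : ℕ∞) (fun y : E3 => ‖v y‖ ^ 2) x := by
        apply this.congr_of_eventuallyEq
        filter_upwards with y
        rw [re_conj_mul_self]
      simpa [hfJdef, div_eq_mul_inv] using h2.mul (hnormsm x 2 hx)
    · intro x hx; simp [hfJdef, hvz x hx]
  have hPsm : ∀ x : E3, x ≠ 0 → ContDiffAt ℝ (⊤ : ℕ∞) P x := by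
    intro x hx
    exact hresm _ x ((hconjsm v x (hvsm x hx)).mul (hgsmAt x))
  have hKint : Integrable fK := by
    apply hIntAux
    · intro x hx
      simpa [hfKdef, div_eq_mul_inv] using (hPsm x hx).mul (hnormsm x 3 hx)
    · intro x hx; simp [hfKdef, hPdef, hgz x hx]
  have hMint : Integrable fM := by
    apply hIntAux
    · intro x hx
      have := hresm _ x ((hconjsm w x (hwsm x hx)).mul (hgsmAt x))
      simpa [hfMdef, div_eq_mul_inv] using this.mul (hnormsm x 2 hx)
    · intro x hx; simp [hfMdef, hgz x hx]
  -- derivative pieces at x ≠ 0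
  have hinvk : ∀ (x : E3) (k : ℕ), x ≠ 0 →
      HasFDerivAt (fun y : E3 => (‖y‖ ^ k)⁻¹)
        ((-(k * ‖x‖ ^ (k-1)) / (‖x‖ ^ k) ^ 2) • ((‖x‖⁻¹ : ℝ) • (innerSL ℝ x))) x := by
    intro x k hx
    have hn : ‖x‖ ≠ 0 := norm_ne_zero_iff.2 hx
    have h1 : HasDerivAt (fun t : ℝ => (t ^ k)⁻¹) (-(k * ‖x‖ ^ (k-1)) / (‖x‖ ^ k) ^ 2) ‖x‖ :=
      (hasDerivAt_pow k ‖x‖).inv (pow_ne_zero k hn)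
    have h2 := h1.comp_hasFDerivAt x (norm_hasFDerivAt hx)
    simpa [Function.comp_def] using h2
  have hconjd : ∀ (φ : E3 → ℂ) (x : E3), DifferentiableAt ℝ φ x →
      HasFDerivAt (fun y => (starRingEnd ℂ) (φ y))
        (Complex.conjCLE.toContinuousLinearMap.comp (fderiv ℝ φ x)) x := by
    intro φ x hφ
    have h1 := Complex.conjCLE.toContinuousLinearMap.hasFDerivAt.comp x hφ.hasFDerivAt
    have heq : (fun y => Complex.conjCLE.toContinuousLinearMap (φ y)) =
        (fun y => (starRingEnd ℂ) (φ y)) := by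
      funext y
      simp [Complex.conjCLE_apply]
    rw [← heq]
    exact h1
  have hgd : ∀ x : E3, HasFDerivAt g (fderiv ℝ g x) x :=
    fun x => (hsm.differentiable (by simp) x).hasFDerivAt
  -- derivative of F₁ := P * (‖·‖^2)⁻¹ in the radial direction
  have hder1 : ∀ x : E3, x ≠ 0 →
      fderiv ℝ (fun y => P y * (‖y‖ ^ 2)⁻¹) x ((‖x‖⁻¹ : ℝ) • x) = fM x + fJ x - 2 * fK x := by
    intro x hx
    have hn : ‖x‖ ≠ 0 := norm_ne_zero_iff.2 hx
    have hvd : HasFDerivAt v (fderiv ℝ v x) x := ((hvsm x hx).differentiableAt (by simp)).hasFDerivAt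
    have hconjv := hconjd v x hvd.differentiableAt
    have hmul1 := hconjv.mul (hgd x)
    have hPd : HasFDerivAt P (Complex.reCLM.comp
        ((starRingEnd ℂ) (v x) • fderiv ℝ g x +
          g x • Complex.conjCLE.toContinuousLinearMap.comp (fderiv ℝ v x))) x := by
      have h1 := Complex.reCLM.hasFDerivAt.comp x hmul1
      have heq : (fun y => Complex.reCLM ((starRingEnd ℂ) (v y) * g y)) = P := by
        funext y; simp [hPdef]
      rw [← heq]
      exact h1
    have hfull := hPd.mul (hinvk x 2 hx)
    rw [HasFDerivAt.fderiv (f := fun y => P y * (‖y‖ ^ 2)⁻¹) hfull]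
    simp only [ContinuousLinearMap.add_apply, ContinuousLinearMap.smul_apply,
      ContinuousLinearMap.coe_comp', Function.comp_apply, smul_eq_mul,
      Complex.reCLM_apply, ContinuousLinearMap.coe_smul', Pi.smul_apply]
    have einner : ((innerSL ℝ) x) ((‖x‖⁻¹ : ℝ) • x) = ‖x‖ := by
      rw [innerSL_apply_apply, real_inner_smul_right, real_inner_self_eq_norm_mul_norm]
      field_simp
    rw [einner]
    have e1 : fderiv ℝ g x ((‖x‖⁻¹ : ℝ) • x) = v x := rfl
    have e2 : fderiv ℝ v x ((‖x‖⁻¹ : ℝ) • x) = w x := rfl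
    rw [e1, e2]
    simp only [ContinuousLinearEquiv.coe_coe, Complex.conjCLE_apply]
    have e4 : ((starRingEnd ℂ) (v x) * v x + g x * (starRingEnd ℂ) (w x)).re
        = ‖v x‖ ^ 2 + ((starRingEnd ℂ) (w x) * g x).re := by
      rw [Complex.add_re, re_conj_mul_self, mul_comm (g x)]
    rw [e4]
    simp only [hfMdef, hfJdef, hfKdef, hfIdef, hPdef]
    field_simp
    ring
  -- derivative of F₂ := Q * (‖·‖^3)⁻¹ in the radial direction
  have hder2 : ∀ x : E3, x ≠ 0 →
      fderiv ℝ (fun y => ((starRingEnd ℂ) (g y) * g y).re * (‖y‖ ^ 3)⁻¹) x ((‖x‖⁻¹ : ℝ) • x)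
        = 2 * fK x - 3 * fI x := by
    intro x hx
    have hn : ‖x‖ ≠ 0 := norm_ne_zero_iff.2 hx
    have hconjg := hconjd g x (hgd x).differentiableAt
    have hmul1 := hconjg.mul (hgd x)
    have hQd : HasFDerivAt (fun y => ((starRingEnd ℂ) (g y) * g y).re) (Complex.reCLM.comp
        ((starRingEnd ℂ) (g x) • fderiv ℝ g x +
          g x • Complex.conjCLE.toContinuousLinearMap.comp (fderiv ℝ g x))) x := by
      have h1 := Complex.reCLM.hasFDerivAt.comp x hmul1
      have heq : (fun y => Complex.reCLM ((starRingEnd ℂ) (g y) * g y)) =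
          (fun y => ((starRingEnd ℂ) (g y) * g y).re) := by
        funext y; simp
      rw [← heq]
      exact h1
    have hfull := hQd.mul (hinvk x 3 hx)
    rw [HasFDerivAt.fderiv (f := fun y => ((starRingEnd ℂ) (g y) * g y).re * (‖y‖ ^ 3)⁻¹) hfull]
    simp only [ContinuousLinearMap.add_apply, ContinuousLinearMap.smul_apply,
      ContinuousLinearMap.coe_comp', Function.comp_apply, smul_eq_mul,
      Complex.reCLM_apply, ContinuousLinearMap.coe_smul', Pi.smul_apply]
    have einner : ((innerSL ℝ) x) ((‖x‖⁻¹ : ℝ) • x) = ‖x‖ := by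
      rw [innerSL_apply_apply, real_inner_smul_right, real_inner_self_eq_norm_mul_norm]
      field_simp
    rw [einner]
    have e1 : fderiv ℝ g x ((‖x‖⁻¹ : ℝ) • x) = v x := rfl
    rw [e1]
    simp only [ContinuousLinearEquiv.coe_coe, Complex.conjCLE_apply]
    have e4 : ((starRingEnd ℂ) (g x) * v x + g x * (starRingEnd ℂ) (v x)).re
        = 2 * P x := by
      simp only [Complex.add_re, hPdef]
      simp only [Complex.mul_re, Complex.conj_re, Complex.conj_im]
      ring
    rw [e4]
    have e5 : ((starRingEnd ℂ) (g x) * g x).re = ‖g x‖ ^ 2 := re_conj_mul_self _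
    rw [e5]
    simp only [hfKdef, hfIdef]
    field_simp
    ring
  -- the two integration-by-parts identities
  have ibp1 := radial_ibp (fun y => P y * (‖y‖ ^ 2)⁻¹) hε
    (by
      intro x hx
      exact (hPsm x hx).mul (hnormsm x 2 hx))
    (by
      intro x hx
      simp [hPdef, hgz x (hballz x hx)])
    (by
      apply HasCompactSupport.intro hcs
      intro x hx
      simp [hPdef, hgz x hx])
  have ibp2 := radial_ibp (fun y => ((starRingEnd ℂ) (g y) * g y).re * (‖y‖ ^ 3)⁻¹) hε
    (by
      intro x hx
      exact (hresm _ x ((hconjsm g x (hgsmAt x)).mul (hgsmAt x))).mul (hnormsm x 3 hx))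
    (by
      intro x hx
      simp [hgz x (hballz x hx)])
    (by
      apply HasCompactSupport.intro hcs
      intro x hx
      simp [hgz x hx])
  -- rewrite both sides of ibp1
  have lhs1 : ∫ x, fderiv ℝ (fun y => P y * (‖y‖ ^ 2)⁻¹) x ((‖x‖⁻¹ : ℝ) • x)
      = (∫ x, fM x) + (∫ x, fJ x) - 2 * ∫ x, fK x := by
    rw [integral_congr_ae (g := fun x => fM x + fJ x - 2 * fK x)
      (by filter_upwards [ae_ne_zero] with x hx; exact hder1 x hx)]
    have hMJ : Integrable (fun x => fM x + fJ x) := hMint.add hJint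
    have hK2 : Integrable (fun x => 2 * fK x) := hKint.const_mul 2
    rw [integral_sub hMJ hK2, integral_add hMint hJint, integral_const_mul]
  have rhs1 : ∫ x, (P x * (‖x‖ ^ 2)⁻¹) * ‖x‖⁻¹ = ∫ x, fK x := by
    apply integral_congr_ae
    filter_upwards [ae_ne_zero] with x hx
    have hn : ‖x‖ ≠ 0 := norm_ne_zero_iff.2 hx
    simp only [hfKdef]
    rw [div_eq_mul_inv, mul_assoc, ← mul_inv, ← pow_succ]
  have lhs2 : ∫ x, fderiv ℝ (fun y => ((starRingEnd ℂ) (g y) * g y).re * (‖y‖ ^ 3)⁻¹) x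
      ((‖x‖⁻¹ : ℝ) • x) = 2 * (∫ x, fK x) - 3 * ∫ x, fI x := by
    rw [integral_congr_ae (g := fun x => 2 * fK x - 3 * fI x)
      (by filter_upwards [ae_ne_zero] with x hx; exact hder2 x hx)]
    have hK2 : Integrable (fun x => 2 * fK x) := hKint.const_mul 2
    have hI3 : Integrable (fun x => 3 * fI x) := hIint.const_mul 3
    rw [integral_sub hK2 hI3, integral_const_mul, integral_const_mul]
  have rhs2 : ∫ x, (((starRingEnd ℂ) (g x) * g x).re * (‖x‖ ^ 3)⁻¹) * ‖x‖⁻¹ = ∫ x, fI x := by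
    apply integral_congr_ae
    filter_upwards [ae_ne_zero] with x hx
    have hn : ‖x‖ ≠ 0 := norm_ne_zero_iff.2 hx
    rw [re_conj_mul_self]
    simp only [hfIdef]
    rw [div_eq_mul_inv, mul_assoc, ← mul_inv, ← pow_succ]
  rw [lhs1, rhs1] at ibp1
  rw [lhs2, rhs2] at ibp2
  set II : ℝ := ∫ x, fI x with hIIdef
  set IJ : ℝ := ∫ x, fJ x with hIJdef
  set IK : ℝ := ∫ x, fK x with hIKdef
  set IM : ℝ := ∫ x, fM x with hIMdef
  -- ibp1 : IM + IJ - 2 IK = -2 IK  →  IM = -IJ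
  -- ibp2 : 2 IK - 3 II = -2 II    →  2 IK = II
  have hM : IM = -IJ := by linarith
  have h2K : 2 * IK = II := by linarith
  -- pointwise Cauchy–Schwarz/AM-GM bound
  have hpt : ∀ x : E3, 2 * fK x ≤ 2 * fJ x + fI x / 2 := by
    intro x
    by_cases hx : x = 0
    · subst hx
      simp [hfKdef, hfIdef, hfJdef]
    · have hn : (0:ℝ) < ‖x‖ := norm_pos_iff.2 hx
      have hP : P x ≤ ‖v x‖ * ‖g x‖ := re_le_norm_mul _ _
      simp only [hfKdef, hfIdef, hfJdef]
      have e1 : 2 * (P x / ‖x‖ ^ 3) = (2 * P x * ‖x‖) / ‖x‖ ^ 4 := by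
        field_simp
      have e2 : 2 * (‖v x‖ ^ 2 / ‖x‖ ^ 2) + (‖g x‖ ^ 2 / ‖x‖ ^ 4) / 2
          = (2 * ‖v x‖ ^ 2 * ‖x‖ ^ 2 + ‖g x‖ ^ 2 / 2) / ‖x‖ ^ 4 := by
        field_simp
      rw [e1, e2]
      gcongr
      have h5 : P x * ‖x‖ ≤ ‖v x‖ * ‖g x‖ * ‖x‖ :=
        mul_le_mul_of_nonneg_right hP (norm_nonneg x)
      nlinarith [sq_nonneg (2 * ‖v x‖ * ‖x‖ - ‖g x‖)]
  have h4J : II ≤ 2 * IJ + II / 2 := by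
    have hJ2 : Integrable (fun x => 2 * fJ x) := hJint.const_mul 2
    have hI2 : Integrable (fun x => fI x / 2) := hIint.div_const 2
    have hRHS : Integrable (fun x => 2 * fJ x + fI x / 2) := hJ2.add hI2
    have := integral_mono (hKint.const_mul 2) hRHS hpt
    rw [integral_const_mul] at this
    rw [integral_add hJ2 hI2, integral_const_mul, integral_div] at this
    linarith
  -- the complex integrand
  have hRL : ∀ y : E3, radialLaplacian g y = w y + ((2 / ‖y‖ : ℝ) : ℂ) * v y := by
    intro y
    simp only [radialLaplacian, ← hvdef, ← hwdef]
    norm_num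
  set T : E3 → ℂ := fun x => (starRingEnd ℂ) (radialLaplacian g x) *
      (-(((lam / ‖x‖ ^ 2 : ℝ)) : ℂ) * g x) with hTdef
  have hTz : ∀ x : E3, x ∉ S → T x = 0 := by
    intro x hx
    simp [hTdef, hgz x hx]
  have hTsm : ∀ x : E3, x ≠ 0 → ContDiffAt ℝ (⊤ : ℕ∞) T x := by
    intro x hx
    have hn : ‖x‖ ≠ 0 := norm_ne_zero_iff.2 hx
    have hRLsm : ContDiffAt ℝ (⊤ : ℕ∞) (fun y => radialLaplacian g y) x := by
      have hcoef : ContDiffAt ℝ (⊤ : ℕ∞) (fun y : E3 => ((2 / ‖y‖ : ℝ) : ℂ)) x :=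
        Complex.ofRealCLM.contDiff.comp_contDiffAt x
          (contDiffAt_const.div (contDiffAt_norm ℝ hx) hn)
      have h1 : ContDiffAt ℝ (⊤ : ℕ∞) (fun y => w y + ((2 / ‖y‖ : ℝ) : ℂ) * v y) x :=
        (hwsm x hx).add (hcoef.mul (hvsm x hx))
      exact h1.congr_of_eventuallyEq (by
        filter_upwards with y
        rw [hRL y])
    have hcoef2 : ContDiffAt ℝ (⊤ : ℕ∞) (fun y : E3 => -(((lam / ‖y‖ ^ 2 : ℝ)) : ℂ)) x := by
      have hreal : ContDiffAt ℝ (⊤ : ℕ∞) (fun y : E3 => lam / ‖y‖ ^ 2) x :=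
        contDiffAt_const.div ((contDiffAt_norm ℝ hx).pow 2) (pow_ne_zero 2 hn)
      have hC : ContDiffAt ℝ (⊤ : ℕ∞) (fun y : E3 => ((lam / ‖y‖ ^ 2 : ℝ) : ℂ)) x :=
        Complex.ofRealCLM.contDiff.comp_contDiffAt x hreal
      exact hC.neg
    exact (hconjsm _ x hRLsm).mul (hcoef2.mul (hgsmAt x))
  have hTint : Integrable T := hIntAuxC T hTsm hTz
  have horig : ∫ x, (starRingEnd ℂ) (radialLaplacian g x) * Ss x = ∫ x, T x := by
    apply integral_congr_ae
    filter_upwards [ae_ne_zero] with x hx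
    rw [hSs x hx, hTdef]
  have hreT : (∫ x, T x).re = ∫ x, (T x).re := by
    have := Complex.reCLM.integral_comp_comm hTint
    simpa using this.symm
  have hTre : ∀ x : E3, x ≠ 0 → (T x).re = -lam * (fM x + 2 * fK x) := by
    intro x hx
    have hn : ‖x‖ ≠ 0 := norm_ne_zero_iff.2 hx
    rw [hTdef]
    simp only [hRL x]
    simp only [hfMdef, hfKdef, hPdef]
    simp only [map_add, map_mul, Complex.conj_ofReal, Complex.mul_re, Complex.mul_im,
      Complex.add_re, Complex.add_im, Complex.conj_re, Complex.conj_im, Complex.neg_re,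
      Complex.neg_im, Complex.ofReal_re, Complex.ofReal_im]
    field_simp
    ring
  have hTreint : ∫ x, (T x).re = -lam * (IM + 2 * IK) := by
    rw [integral_congr_ae (g := fun x => -lam * (fM x + 2 * fK x))
      (by filter_upwards [ae_ne_zero] with x hx; exact hTre x hx)]
    have hK2 : Integrable (fun x => 2 * fK x) := hKint.const_mul 2
    rw [integral_const_mul, integral_add hMint hK2, integral_const_mul]
  have hJnn : 0 ≤ IJ := by
    apply integral_nonneg
    intro x
    simp only [hfJdef]
    positivity
  rw [horig, hreT, hTreint, hM]
  nlinarith [mul_nonneg hlam (by linarith : (0:ℝ) ≤ 4 * IJ - II)]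
end
end
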